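/- For every infinite cardinal κ, u(ω) ≤ u(κ), where u denotes the ultrafilter number function. -/

import Mathlib

open Cardinal Set

universe u v

/-- An ultrafilter is uniform if all of its members have full cardinality. -/
def Uniform {α : Type u} (U : Ultrafilter α) : Prop := ∀ X ∈ U, #X = #α

/-- An ultrafilter `U` over `S` is `l`-decomposable if there is `f : S → l`
such that preimages of sets of size `< l` are not in `U`. -/
def Decomposable {S : Type u} (U : Ultrafilter S) (l : Cardinal.{v}) : Prop :=
  ∃ f : S → l.out, ∀ X : Set l.out, #X < l → f ⁻¹' X ∉ U

/-- The character of an ultrafilter: the least cardinality of a base. -/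
noncomputable def charU {α : Type u} (U : Ultrafilter α) : Cardinal.{u} :=
  sInf {c | ∃ B : Set (Set α), #B = c ∧ (∀ X ∈ B, X ∈ U) ∧ ∀ Y ∈ U, ∃ X ∈ B, X ⊆ Y}

/-- The ultrafilter number at a cardinal `κ`: the minimal character of a
uniform ultrafilter over (a set of size) `κ`. -/
noncomputable def uNumber (κ : Cardinal.{u}) : Cardinal.{u} :=
  sInf {c | ∃ U : Ultrafilter κ.out, Uniform U ∧ charU U = c}

/-!
If an ultrafilter `U` realising `u(κ)` is `ω`-decomposable, pushing it forward along the
decomposing map gives a uniform ultrafilter over `ω` whose character is at most that of `U`.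
Otherwise `U` is `σ`-complete; a `σ`-complete ultrafilter makes every map into `𝒫(ω)`
constant on a member, so a uniform one lives on a set of size `> 2^ω`. Then
`u(ω) ≤ 2^ω < κ ≤ u(κ)`.
-/

section Character

variable {α : Type u} (U : Ultrafilter α)

theorem charU_le_mk (B : Set (Set α)) (hBU : ∀ X ∈ B, X ∈ U)
    (hbase : ∀ Y ∈ U, ∃ X ∈ B, X ⊆ Y) : charU U ≤ #B :=
  csInf_le' ⟨B, rfl, hBU, hbase⟩

theorem exists_base_mk_eq_charU :
    ∃ B : Set (Set α), #B = charU U ∧ (∀ X ∈ B, X ∈ U) ∧ ∀ Y ∈ U, ∃ X ∈ B, X ⊆ Y := by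
  have hne : {c | ∃ B : Set (Set α), #B = c ∧ (∀ X ∈ B, X ∈ U) ∧
      ∀ Y ∈ U, ∃ X ∈ B, X ⊆ Y}.Nonempty :=
    ⟨_, {X | X ∈ U}, rfl, fun _ hX => hX, fun Y hY => ⟨Y, hY, subset_rfl⟩⟩
  exact csInf_mem hne

theorem charU_le_two_power : charU U ≤ 2 ^ #α :=
  (charU_le_mk U {X | X ∈ U} (fun _ hX => hX) fun Y hY => ⟨Y, hY, subset_rfl⟩).trans
    ((mk_set_le _).trans_eq mk_set)

/-- A base of size `< #α` would allow choosing a point in each member; the set of these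
points is too small to be in `U`, yet its complement contains no member of the base. -/
theorem mk_le_charU_of_uniform (hU : Uniform U) : #α ≤ charU U := by
  by_contra! hlt
  obtain ⟨B, hBcard, hBU, hbase⟩ := exists_base_mk_eq_charU U
  choose g hg using fun X : B => Ultrafilter.nonempty_of_mem (hBU X X.2)
  have hsmall : #(range g) < #α := mk_range_le.trans_lt (hBcard ▸ hlt)
  have hcompl : (range g)ᶜ ∈ U :=
    Ultrafilter.compl_mem_iff_notMem.mpr fun hmem => (hU _ hmem).not_lt hsmall
  obtain ⟨X, hX, hXsub⟩ := hbase _ hcompl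
  exact hXsub (hg ⟨X, hX⟩) ⟨⟨X, hX⟩, rfl⟩

theorem charU_map_le {β : Type u} (f : α → β) : charU (U.map f) ≤ charU U := by
  obtain ⟨B, hBcard, hBU, hbase⟩ := exists_base_mk_eq_charU U
  refine (charU_le_mk _ (image f '' B) ?_ ?_).trans (mk_image_le.trans_eq hBcard)
  · rintro _ ⟨X, hX, rfl⟩
    exact Ultrafilter.mem_map.mpr (Filter.mem_of_superset (hBU X hX) (subset_preimage_image f X))
  · intro Y hY
    obtain ⟨X, hX, hXY⟩ := hbase _ hY
    exact ⟨f '' X, ⟨X, hX, rfl⟩, image_subset_iff.mpr hXY⟩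

end Character

theorem exists_uniform (α : Type u) [Infinite α] : ∃ U : Ultrafilter α, Uniform U := by
  let F : Filter α := Filter.comk (fun s => #s < #α)
    (by simpa using aleph0_pos.trans_le (aleph0_le_mk α))
    (fun _ ht _ hst => (mk_le_mk_of_subset hst).trans_lt ht)
    (fun _ hs _ ht => (mk_union_le _ _).trans_lt (add_lt_of_lt (aleph0_le_mk α) hs ht))
  have : F.NeBot := ⟨fun hbot => by
    simpa [F] using Filter.empty_mem_iff_bot.mpr hbot⟩
  obtain ⟨U, hFU⟩ := Ultrafilter.exists_le F
  refine ⟨U, fun X hX => (mk_set_le X).antisymm (not_lt.mp fun hlt => ?_)⟩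
  have hcompl : Xᶜ ∈ F := Filter.compl_mem_comk.mpr hlt
  exact Ultrafilter.compl_mem_iff_notMem.mp (hFU hcompl) hX

theorem Decomposable.exists_uniform_map {α : Type u} {U : Ultrafilter α} {l : Cardinal.{v}}
    (h : Decomposable U l) : ∃ f : α → l.out, Uniform (U.map f) := by
  obtain ⟨f, hf⟩ := h
  refine ⟨f, fun X hX => (mk_set_le X).antisymm ?_⟩
  rw [mk_out]
  exact not_lt.mp fun hlt => hf X hlt hX

section Completeness

variable {α : Type u} (U : Ultrafilter α)

theorem exists_preimage_singleton_mem_of_not_decomposable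
    (h : ¬ Decomposable U (ℵ₀ : Cardinal.{v})) (g : α → ℕ) : ∃ n, g ⁻¹' {n} ∈ U := by
  obtain ⟨e⟩ : Nonempty (ℕ ≃ (ℵ₀ : Cardinal.{v}).out) := lift_mk_eq'.mp (by simp)
  have hfin : ∀ f : α → (ℵ₀ : Cardinal.{v}).out, ∃ X : Set _, X.Finite ∧ f ⁻¹' X ∈ U := by
    simpa [Decomposable] using h
  obtain ⟨X, hXfin, hX⟩ := hfin (e ∘ g)
  have hpre : e ∘ g ⁻¹' X = ⋃ x ∈ X, g ⁻¹' {e.symm x} := by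
    ext a
    simp [Equiv.eq_symm_apply]
  rw [hpre] at hX
  obtain ⟨x, -, hx⟩ := (Ultrafilter.finite_biUnion_mem_iff hXfin).mp hX
  exact ⟨_, hx⟩

/-- For `Y : ℕ → Set α`, some fibre of "the first `n` with `a ∉ Y n`" is in `U`, and its
intersection with `Y n` lies inside `⋂ n, Y n`. -/
theorem countableInterFilter_of_forall_exists_preimage_singleton_mem
    (h : ∀ g : α → ℕ, ∃ n, g ⁻¹' {n} ∈ U) : CountableInterFilter (U : Filter α) where
  countable_sInter_mem S hS hSU := by
    classical
    rcases S.eq_empty_or_nonempty with rfl | hne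
    · simp
    obtain ⟨Y, rfl⟩ := hS.exists_eq_range hne
    rw [sInter_range]
    let g : α → ℕ := fun a => if hex : ∃ m, a ∉ Y m then Nat.find hex else 0
    obtain ⟨n, hn⟩ := h g
    refine Filter.mem_of_superset (Filter.inter_mem hn (hSU _ ⟨n, rfl⟩)) ?_
    rintro a ⟨hga, hYa⟩
    by_contra hnot
    have hex : ∃ m, a ∉ Y m := by simpa using hnot
    have hfind : Nat.find hex = n := by simpa [g, hex] using hga
    exact Nat.find_spec hex (hfind ▸ hYa)

theorem countableInterFilter_of_not_decomposable (h : ¬ Decomposable U (ℵ₀ : Cardinal.{v})) :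
    CountableInterFilter (U : Filter α) :=
  countableInterFilter_of_forall_exists_preimage_singleton_mem U
    (exists_preimage_singleton_mem_of_not_decomposable U h)

theorem exists_preimage_singleton_mem_of_countableInterFilter {ι : Type*} [Countable ι]
    [CountableInterFilter (U : Filter α)] (f : α → Set ι) : ∃ s, f ⁻¹' {s} ∈ U := by
  classical
  let s : Set ι := {i | {a | i ∈ f a} ∈ U}
  have hagree : ∀ i, {a | i ∈ f a ↔ i ∈ s} ∈ U := by
    intro i
    by_cases hi : {a | i ∈ f a} ∈ U
    · simp [s, hi]
    · simpa [s, hi, compl_ofPred] using Ultrafilter.compl_mem_iff_notMem.mpr hi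
  refine ⟨s, Filter.mem_of_superset (countable_iInter_mem.mpr hagree) ?_⟩
  intro a ha
  ext i
  exact mem_iInter.mp ha i

theorem continuum_lt_mk_of_uniform [Infinite α] [CountableInterFilter (U : Filter α)]
    (hU : Uniform U) : 𝔠 < #α := by
  by_contra! hle
  obtain ⟨f⟩ : Nonempty (α ↪ Set ℕ) := lift_mk_le'.mp (by simpa using hle)
  obtain ⟨s, hs⟩ := exists_preimage_singleton_mem_of_countableInterFilter U f
  have hsub : (f ⁻¹' {s}).Subsingleton := fun a ha b hb => f.injective (ha.trans hb.symm)
  have hsmall : #(f ⁻¹' {s}) < #α :=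
    (mk_le_one_iff_set_subsingleton.mpr hsub).trans_lt (one_lt_aleph0.trans_le (aleph0_le_mk α))
  exact (hU _ hs).not_lt hsmall

end Completeness

theorem uNumber_le_charU {κ : Cardinal.{u}} (U : Ultrafilter κ.out) (hU : Uniform U) :
    uNumber κ ≤ charU U :=
  csInf_le' ⟨U, hU, rfl⟩

theorem exists_uniform_charU_eq_uNumber {κ : Cardinal.{u}} (hκ : ℵ₀ ≤ κ) :
    ∃ U : Ultrafilter κ.out, Uniform U ∧ charU U = uNumber κ := by
  have : Infinite κ.out := infinite_iff.mpr (by rwa [mk_out])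
  obtain ⟨U, hU⟩ := exists_uniform κ.out
  have hne : {c | ∃ U : Ultrafilter κ.out, Uniform U ∧ charU U = c}.Nonempty :=
    ⟨charU U, U, hU, rfl⟩
  exact csInf_mem hne

theorem uNumber_aleph0_le_continuum : uNumber (ℵ₀ : Cardinal.{u}) ≤ 𝔠 := by
  obtain ⟨U, hU, hchar⟩ := exists_uniform_charU_eq_uNumber (le_refl (ℵ₀ : Cardinal.{u}))
  have hbound := charU_le_two_power U
  rwa [mk_out, two_power_aleph0, hchar] at hbound

/-- `u(ω) ≤ u(κ)` for every infinite cardinal `κ`. -/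
theorem stmt8 (κ : Cardinal.{u}) (hκ : ℵ₀ ≤ κ) : uNumber ℵ₀ ≤ uNumber κ := by
  obtain ⟨U, hU, hchar⟩ := exists_uniform_charU_eq_uNumber hκ
  rw [← hchar]
  by_cases hdec : Decomposable U (ℵ₀ : Cardinal.{u})
  · obtain ⟨f, hf⟩ := hdec.exists_uniform_map
    exact (uNumber_le_charU _ hf).trans (charU_map_le U f)
  · have := countableInterFilter_of_not_decomposable U hdec
    have : Infinite κ.out := infinite_iff.mpr (by rwa [mk_out])
    calc uNumber ℵ₀ ≤ 𝔠 := uNumber_aleph0_le_continuum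
      _ ≤ #κ.out := (continuum_lt_mk_of_uniform U hU).le
      _ ≤ charU U := mk_le_charU_of_uniform U hU
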